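/- With m,n ≥ 2, in O_q(M_{m,n})[X_{1n}⁻¹] with X'_{ij} = X_{ij} − q⁻¹X_{1j}X_{in}X_{1n}⁻¹, for 2 ≤ i ≤ m and 1 ≤ l ≤ n−1 one has: X_{in}X'_{kl} = X'_{kl}X_{in} for 2 ≤ k < i; X_{in}X'_{il} = qX'_{il}X_{in}; and X_{in}X'_{kl} − X'_{kl}X_{in} = (q−q⁻¹)X_{kn}X'_{il} for i < k ≤ m. -/

import Mathlib

noncomputable section
open scoped BigOperators

/-- The defining relations of an `m × n` `q`-quantum matrix. -/
def IsQMat {k A : Type*} [Field k] [Ring A] [Algebra k A] (q : k) {m n : ℕ}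
    (X : Fin m → Fin n → A) : Prop :=
  (∀ (i : Fin m) (j l : Fin n), j < l → X i j * X i l = q • (X i l * X i j)) ∧
  (∀ (i r : Fin m) (j : Fin n), i < r → X i j * X r j = q • (X r j * X i j)) ∧
  (∀ (i r : Fin m) (j l : Fin n), i < r → j < l → X i l * X r j = X r j * X i l) ∧
  (∀ (i r : Fin m) (j l : Fin n), i < r → j < l →
    X i j * X r l - X r l * X i j = (q - q⁻¹) • (X i l * X r j))

/-- The relations defining `O_q(M_{m,n})` as a quotient of the free algebra. -/
inductive QMRel (k : Type*) [Field k] (q : k) (m n : ℕ) :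
    FreeAlgebra k (Fin m × Fin n) → FreeAlgebra k (Fin m × Fin n) → Prop
  | row (i : Fin m) (j l : Fin n) (h : j < l) :
      QMRel k q m n (FreeAlgebra.ι k (i, j) * FreeAlgebra.ι k (i, l))
        (q • (FreeAlgebra.ι k (i, l) * FreeAlgebra.ι k (i, j)))
  | col (i r : Fin m) (j : Fin n) (h : i < r) :
      QMRel k q m n (FreeAlgebra.ι k (i, j) * FreeAlgebra.ι k (r, j))
        (q • (FreeAlgebra.ι k (r, j) * FreeAlgebra.ι k (i, j)))
  | anti (i r : Fin m) (j l : Fin n) (h1 : i < r) (h2 : j < l) :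
      QMRel k q m n (FreeAlgebra.ι k (i, l) * FreeAlgebra.ι k (r, j))
        (FreeAlgebra.ι k (r, j) * FreeAlgebra.ι k (i, l))
  | diag (i r : Fin m) (j l : Fin n) (h1 : i < r) (h2 : j < l) :
      QMRel k q m n (FreeAlgebra.ι k (i, j) * FreeAlgebra.ι k (r, l))
        (FreeAlgebra.ι k (r, l) * FreeAlgebra.ι k (i, j) +
          (q - q⁻¹) • (FreeAlgebra.ι k (i, l) * FreeAlgebra.ι k (r, j)))

/-- The quantum matrix algebra `O_q(M_{m,n})`. -/
abbrev OqM (k : Type*) [Field k] (q : k) (m n : ℕ) := RingQuot (QMRel k q m n)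

/-- The canonical generators `X_{ij}` of `O_q(M_{m,n})`. -/
def qX (k : Type*) [Field k] (q : k) (m n : ℕ) (i : Fin m) (j : Fin n) : OqM k q m n :=
  RingQuot.mkAlgHom k (QMRel k q m n) (FreeAlgebra.ι k (i, j))

/-- The number of inversions (the length `ℓ(σ)`) of a permutation of `Fin t`. -/
def invCount {t : ℕ} (σ : Equiv.Perm (Fin t)) : ℕ :=
  Finset.card (Finset.univ.filter (fun p : Fin t × Fin t => p.1 < p.2 ∧ σ p.2 < σ p.1))

/-- The quantum determinant of a `t × t` matrix with entries in an algebra: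
`Σ_σ (-q)^{ℓ(σ)} M_{1,σ(1)} ⋯ M_{t,σ(t)}`. -/
def qdet {k : Type*} [Field k] {A : Type*} [Ring A] [Algebra k A] (q : k) {t : ℕ}
    (M : Fin t → Fin t → A) : A :=
  ∑ σ : Equiv.Perm (Fin t), ((-q) ^ invCount σ) • (List.ofFn (fun i => M i (σ i))).prod

/-- The quantum minor `[I|J]` of the matrix `X` on rows `I` and columns `J`. -/
def qminor {k : Type*} [Field k] {A : Type*} [Ring A] [Algebra k A] (q : k) {m n t : ℕ}
    (X : Fin m → Fin n → A) (I : Finset (Fin m)) (J : Finset (Fin n))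
    (hI : I.card = t) (hJ : J.card = t) : A :=
  qdet q (fun a b => X (I.orderIsoOfFin hI a) (J.orderIsoOfFin hJ b))

/-- The elements `X'_{ij} = X_{ij} - q⁻¹ X_{1j} X_{in} X_{1n}⁻¹` in a localisation of
`O_q(M_{m,n})` at the normal element `X_{1n}`, where `φ` is the localisation map and
`u = X_{1n}⁻¹`. -/
def Xp {k B : Type*} [Field k] [Ring B] [Algebra k B] (q : k) {m n : ℕ}
    (hm : 0 < m) (hn : 0 < n) (φ : OqM k q m n →ₐ[k] B) (u : B)
    (i : Fin m) (j : Fin n) : B :=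
  φ (qX k q m n i j) -
    q⁻¹ • (φ (qX k q m n ⟨0, hm⟩ j) * φ (qX k q m n i ⟨n - 1, by omega⟩) * u)

/-! The three relations come from moving `X_{in}` past each factor of
`X'_{kl} = X_{kl} - q⁻¹ X_{1l} X_{kn} X_{1n}⁻¹`. Conjugating the column relation
`X_{1n} X_{in} = q X_{in} X_{1n}` by `X_{1n}⁻¹` gives `X_{in} X_{1n}⁻¹ = q X_{1n}⁻¹ X_{in}`; the
only other non-monomial rule is `X_{in} X_{1l} = X_{1l} X_{in} - (q - q⁻¹) X_{1n} X_{il}`, whose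
correction term, after `X_{1n}` is cancelled against `X_{1n}⁻¹`, either cancels the one coming
from `X_{in} X_{kl}` (for `k < i`), or recombines into `(q - q⁻¹) X_{kn} X'_{il}` (for `k > i`). -/

theorem mul_inv_eq_smul_inv_mul {k A : Type*} [Field k] [Ring A] [Algebra k A] {q : k}
    {a x u : A} (hxa : x * a = q • (a * x)) (hxu : x * u = 1) (hux : u * x = 1) :
    a * u = q • (u * a) := by
  calc a * u = u * (x * a) * u := by rw [← mul_assoc u x a, hux, one_mul]
    _ = q • (u * a) := by rw [hxa, mul_smul_comm, smul_mul_assoc, mul_assoc, mul_assoc, hxu,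
        mul_one]

section IsQMat

variable {k A : Type*} [Field k] [Ring A] [Algebra k A] {q : k} {m n : ℕ}
  {X : Fin m → Fin n → A}

theorem isQMat_qX (q : k) (m n : ℕ) : IsQMat q (qX k q m n) := by
  have rel {x y} (h : QMRel k q m n x y) :=
    RingQuot.mkAlgHom_rel k (A := FreeAlgebra k (Fin m × Fin n)) h
  refine ⟨fun i j l h ↦ ?_, fun i r j h ↦ ?_, fun i r j l h₁ h₂ ↦ ?_, fun i r j l h₁ h₂ ↦ ?_⟩
  · simpa only [qX, map_mul, map_smul] using rel (.row i j l h)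
  · simpa only [qX, map_mul, map_smul] using rel (.col i r j h)
  · simpa only [qX, map_mul] using rel (.anti i r j l h₁ h₂)
  · have h := rel (.diag i r j l h₁ h₂)
    simp only [map_mul, map_add, map_smul] at h
    simp only [qX, h, add_sub_cancel_left]

theorem IsQMat.map {B : Type*} [Ring B] [Algebra k B] (hX : IsQMat q X) (f : A →ₐ[k] B) :
    IsQMat q (fun i j ↦ f (X i j)) := by
  obtain ⟨hrow, hcol, hanti, hdiag⟩ := hX
  refine ⟨fun i j l h ↦ ?_, fun i r j h ↦ ?_, fun i r j l h₁ h₂ ↦ ?_, fun i r j l h₁ h₂ ↦ ?_⟩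
  · simp only [← map_mul, hrow i j l h, map_smul]
  · simp only [← map_mul, hcol i r j h, map_smul]
  · simp only [← map_mul, hanti i r j l h₁ h₂]
  · simp only [← map_mul, ← map_sub, hdiag i r j l h₁ h₂, map_smul]

theorem IsQMat.mul_row (hX : IsQMat q X) (i : Fin m) {j l : Fin n} (h : j < l) :
    X i j * X i l = q • (X i l * X i j) :=
  hX.1 i j l h

theorem IsQMat.mul_col (hX : IsQMat q X) {i r : Fin m} (j : Fin n) (h : i < r) :
    X i j * X r j = q • (X r j * X i j) :=
  hX.2.1 i r j h

theorem IsQMat.commute_antidiag (hX : IsQMat q X) {i r : Fin m} {j l : Fin n} (h₁ : i < r)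
    (h₂ : j < l) : Commute (X i l) (X r j) :=
  hX.2.2.1 i r j l h₁ h₂

theorem IsQMat.mul_diag (hX : IsQMat q X) {i r : Fin m} {j l : Fin n} (h₁ : i < r)
    (h₂ : j < l) : X r l * X i j = X i j * X r l - (q - q⁻¹) • (X i l * X r j) := by
  rw [← hX.2.2.2 i r j l h₁ h₂, sub_sub_cancel]

/-- `X'_{rl}` with respect to the pivot `(p, c)`, where `u` is an inverse of `X_{pc}`. -/
def xPrime (q : k) (X : Fin m → Fin n → A) (p : Fin m) (c : Fin n) (u : A) (r : Fin m)
    (l : Fin n) : A :=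
  X r l - q⁻¹ • (X p l * X r c * u)

variable (hX : IsQMat q X) {p i r : Fin m} {c l : Fin n} {u : A}
include hX

theorem IsQMat.mul_pivotRow_mul (hpi : p < i) (hl : l < c) (y : A) :
    X i c * (X p l * y) = X p l * (X i c * y) - (q - q⁻¹) • (X i l * (X p c * y)) := by
  rw [← mul_assoc, hX.mul_diag hpi hl, sub_mul, smul_mul_assoc, mul_assoc, mul_assoc,
    ← mul_assoc (X p c), (hX.commute_antidiag hpi hl).eq, mul_assoc]

variable (hu₁ : X p c * u = 1)
include hu₁

theorem IsQMat.pivot_mul_col_mul_inv (hpr : p < r) : X p c * (X r c * u) = q • X r c := by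
  rw [← mul_assoc, hX.mul_col c hpr, smul_mul_assoc, mul_assoc, hu₁, mul_one]

variable (hu₂ : u * X p c = 1)
include hu₂

theorem IsQMat.col_mul_inv (hpi : p < i) : X i c * u = q • (u * X i c) :=
  mul_inv_eq_smul_inv_mul (hX.mul_col c hpi) hu₁ hu₂

theorem IsQMat.commute_xPrime_of_lt (hq : q ≠ 0) (hpr : p < r) (hri : r < i) (hl : l < c) :
    Commute (X i c) (xPrime q X p c u r l) := by
  have hcol : X i c * X r c = q⁻¹ • (X r c * X i c) := by
    rw [hX.mul_col c hri, smul_smul, inv_mul_cancel₀ hq, one_smul]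
  simp only [Commute, SemiconjBy, xPrime, mul_sub, sub_mul, mul_smul_comm, smul_mul_assoc,
    mul_assoc]
  rw [hX.mul_pivotRow_mul (hpr.trans hri) hl, hX.pivot_mul_col_mul_inv hu₁ hpr,
    ← mul_assoc _ (X r c), hcol, smul_mul_assoc, mul_assoc,
    hX.col_mul_inv hu₁ hu₂ (hpr.trans hri), hX.mul_diag hri hl, (hX.commute_antidiag hri hl).eq]
  simp only [mul_smul_comm, smul_sub, smul_smul]
  match_scalars <;> grind

theorem IsQMat.mul_xPrime_self (hq : q ≠ 0) (hpi : p < i) (hl : l < c) :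
    X i c * xPrime q X p c u i l = q • (xPrime q X p c u i l * X i c) := by
  have hrow : X i c * X i l = q⁻¹ • (X i l * X i c) := by
    rw [hX.mul_row i hl, smul_smul, inv_mul_cancel₀ hq, one_smul]
  simp only [xPrime, mul_sub, sub_mul, mul_smul_comm, smul_mul_assoc, mul_assoc]
  rw [hX.mul_pivotRow_mul hpi hl, hX.pivot_mul_col_mul_inv hu₁ hpi, hrow,
    hX.col_mul_inv hu₁ hu₂ hpi]
  simp only [mul_smul_comm, smul_sub, smul_smul]
  match_scalars <;> grind

theorem IsQMat.mul_xPrime_sub_of_gt (hq : q ≠ 0) (hpi : p < i) (hir : i < r) (hl : l < c) :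
    X i c * xPrime q X p c u r l - xPrime q X p c u r l * X i c
      = (q - q⁻¹) • (X r c * xPrime q X p c u i l) := by
  have hpr := hpi.trans hir
  simp only [xPrime, mul_sub, sub_mul, mul_smul_comm, smul_mul_assoc, mul_assoc]
  rw [hX.mul_pivotRow_mul hpi hl, hX.mul_pivotRow_mul hpr hl, hX.pivot_mul_col_mul_inv hu₁ hpr,
    hX.pivot_mul_col_mul_inv hu₁ hpi, ← mul_assoc (X i c) (X r c), hX.mul_col c hir,
    smul_mul_assoc, mul_assoc, hX.col_mul_inv hu₁ hu₂ hpi, hX.mul_diag hir hl,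
    (hX.commute_antidiag hir hl).eq]
  simp only [mul_smul_comm, smul_sub, smul_smul]
  match_scalars <;> grind

end IsQMat

/-- Indices are zero-based: the paper's `2 ≤ i ≤ m` and `1 ≤ l ≤ n - 1` read `1 ≤ i` and
`l < n - 1`. -/
theorem relations_last_column_with_xprime {k B : Type*} [Field k] [Ring B] [Algebra k B]
    (q : k) (hq : q ≠ 0) {m n : ℕ} (hm : 2 ≤ m) (hn : 2 ≤ n)
    (φ : OqM k q m n →ₐ[k] B) (u : B)
    (hu1 : φ (qX k q m n ⟨0, by omega⟩ ⟨n - 1, by omega⟩) * u = 1)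
    (hu2 : u * φ (qX k q m n ⟨0, by omega⟩ ⟨n - 1, by omega⟩) = 1)
    (i : Fin m) (hi : 1 ≤ (i : ℕ)) (l : Fin n) (hl : (l : ℕ) < n - 1) :
    (∀ r : Fin m, 1 ≤ (r : ℕ) → (r : ℕ) < (i : ℕ) →
        φ (qX k q m n i ⟨n - 1, by omega⟩) * Xp q (by omega) (by omega) φ u r l
          = Xp q (by omega) (by omega) φ u r l * φ (qX k q m n i ⟨n - 1, by omega⟩)) ∧
    (φ (qX k q m n i ⟨n - 1, by omega⟩) * Xp q (by omega) (by omega) φ u i l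
        = q • (Xp q (by omega) (by omega) φ u i l * φ (qX k q m n i ⟨n - 1, by omega⟩))) ∧
    (∀ r : Fin m, (i : ℕ) < (r : ℕ) →
        φ (qX k q m n i ⟨n - 1, by omega⟩) * Xp q (by omega) (by omega) φ u r l
            - Xp q (by omega) (by omega) φ u r l * φ (qX k q m n i ⟨n - 1, by omega⟩)
          = (q - q⁻¹) • (φ (qX k q m n r ⟨n - 1, by omega⟩) *
              Xp q (by omega) (by omega) φ u i l)) := by
  have hX := (isQMat_qX q m n).map φ
  have hpi : (⟨0, by omega⟩ : Fin m) < i := hi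
  have hlc : l < (⟨n - 1, by omega⟩ : Fin n) := hl
  exact ⟨fun r hr hri ↦ hX.commute_xPrime_of_lt hu1 hu2 hq hr hri hlc,
    hX.mul_xPrime_self hu1 hu2 hq hpi hlc,
    fun r hir ↦ hX.mul_xPrime_sub_of_gt hu1 hu2 hq hpi hir hlc⟩
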